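/- arXiv:2409.01425 — 4 statements merged into one kernel-verified Lean document; each statement's English description precedes it below -/
import Mathlib

section
/- Let G be a finite abstract simplicial complex with vertex set V. If every simplex of G is a subset of some k-dimensional simplex or contains a k-dimensional simplex (i.e., the k-dimensional simplices G_k cover G in the sense that every simplex relates to G_k by inclusion as described), then the k-form curvature K_k(x) = \sum_{y \subseteq x, y \in G} \omega(y)/d_k(y) + \sum_{j > k} (-1)^j d_j(x)/\binom{j+1}{k+1}, where \omega(y) = (-1)^{dim(y)}, d_k(y) is the number of k-dimensional simplices containing y, and d_j(x) is the number of j-dimensional simplices containing x, satisfies Gauss-Bonnet: \sum_{x \in G_k} K_k(x) = \chi(G) = \sum_{x \in G} (-1)^{dim(x)}. -/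
/-!
Split the Euler characteristic at dimension `k`. A simplex `y` of dimension at most `k` lies in
`d_k(y) > 0` simplices of `G_k` and hands each of them the share `ω(y) / d_k(y)`, so the first part
of the curvature sums to the contribution of these simplices. For `j > k`, every `(k+1)`-subset of
a `j`-simplex is a simplex, so double counting gives `∑_{x ∈ G_k} d_j(x) = |G_j| * C(j+1, k+1)`,
and the second part sums to the contribution of the simplices of dimension above `k`.
-/

/-- `G` is a finite abstract simplicial complex: a finite collection of nonempty
finite sets closed under taking nonempty subsets. -/
def IsSimplicialComplex {α : Type*} [DecidableEq α] (G : Finset (Finset α)) : Prop :=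
  (∀ x ∈ G, x.Nonempty) ∧ ∀ x ∈ G, ∀ y : Finset α, y ⊆ x → y.Nonempty → y ∈ G

open Finset

def faceDegree {α : Type*} [DecidableEq α] (G : Finset (Finset α)) (j : ℕ) (y : Finset α) : ℕ :=
  #{z ∈ G | z.card = j + 1 ∧ y ⊆ z}

namespace Finset

variable {ι κ K : Type*} [Field K] [CharZero K]

theorem sum_sum_filter_div_card_filter (s : Finset ι) (t : Finset κ) (r : κ → ι → Prop)
    [∀ y x, Decidable (r y x)] (f : κ → K) :
    ∑ x ∈ s, ∑ y ∈ t with r y x, f y / #{x ∈ s | r y x} = ∑ y ∈ t with ∃ x ∈ s, r y x, f y := by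
  rw [sum_comm' (t' := t) (s' := fun y => {x ∈ s | r y x}) (by simp only [mem_filter]; tauto),
    sum_filter]
  refine sum_congr rfl fun y _ => ?_
  rw [sum_const, nsmul_eq_mul]
  split_ifs with h
  · have hne : (#{x ∈ s | r y x} : K) ≠ 0 :=
      Nat.cast_ne_zero.2 (card_pos.2 (filter_nonempty_iff.2 h)).ne'
    field_simp
  · rw [filter_false_of_mem fun x hx hr => h ⟨x, hx, hr⟩, card_empty, Nat.cast_zero, zero_mul]

theorem sum_filter_lt_card_eq_sum_Ioc {α R : Type*} [Semiring R] (G : Finset (Finset α)) (k : ℕ)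
    (f : ℕ → R) :
    ∑ y ∈ G with k + 1 < y.card, f (y.card - 1) =
      ∑ j ∈ Ioc k (G.sup card), f j * #{y ∈ G | y.card = j + 1} := by
  have hmaps : ∀ y ∈ G.filter (k + 1 < ·.card), y.card - 1 ∈ Ioc k (G.sup card) := by
    intro y hy
    obtain ⟨hyG, hky⟩ := mem_filter.1 hy
    have hle : y.card ≤ G.sup card := le_sup hyG
    rw [mem_Ioc]
    omega
  rw [← sum_fiberwise_of_maps_to hmaps]
  refine sum_congr rfl fun j hj => ?_
  have hkj : k < j := (mem_Ioc.1 hj).1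
  have hfiber :
      ({y ∈ G | k + 1 < y.card}.filter fun y => y.card - 1 = j) = {y ∈ G | y.card = j + 1} := by
    rw [filter_filter]
    exact filter_congr fun y _ => by omega
  rw [hfiber, sum_congr rfl fun y hy => by rw [(mem_filter.1 hy).2, Nat.add_sub_cancel],
    sum_const, nsmul_eq_mul']

end Finset

namespace IsSimplicialComplex

variable {α K : Type*} [DecidableEq α] [Field K] [CharZero K] {G : Finset (Finset α)}

theorem filter_card_subset_eq_powersetCard (hG : IsSimplicialComplex G) {z : Finset α} (hz : z ∈ G)
    (k : ℕ) : {x ∈ G | x.card = k + 1 ∧ x ⊆ z} = z.powersetCard (k + 1) := by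
  ext x
  simp only [mem_filter, mem_powersetCard]
  constructor
  · rintro ⟨-, hcard, hsub⟩
    exact ⟨hsub, hcard⟩
  · rintro ⟨hsub, hcard⟩
    exact ⟨hG.2 z hz x hsub (card_pos.1 (hcard ▸ k.succ_pos)), hcard, hsub⟩

theorem sum_faceDegree (hG : IsSimplicialComplex G) (k j : ℕ) :
    ∑ x ∈ G with x.card = k + 1, faceDegree G j x =
      #{z ∈ G | z.card = j + 1} * (j + 1).choose (k + 1) := by
  have hcount := sum_card_bipartiteAbove_eq_sum_card_bipartiteBelow (· ⊆ ·)
    (s := {x ∈ G | x.card = k + 1}) (t := {z ∈ G | z.card = j + 1})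
  simp only [bipartiteAbove, bipartiteBelow, filter_filter] at hcount
  unfold faceDegree
  rw [hcount, sum_congr rfl fun z hz => by
    rw [hG.filter_card_subset_eq_powersetCard (mem_filter.1 hz).1, card_powersetCard,
      (mem_filter.1 hz).2], sum_const, smul_eq_mul]

theorem sum_sum_Ioc_mul_faceDegree_div_choose (hG : IsSimplicialComplex G) (k N : ℕ) (g : ℕ → K) :
    ∑ x ∈ G with x.card = k + 1, ∑ j ∈ Ioc k N, g j * faceDegree G j x / (j + 1).choose (k + 1) =
      ∑ j ∈ Ioc k N, g j * #{z ∈ G | z.card = j + 1} := by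
  rw [sum_comm]
  refine sum_congr rfl fun j hj => ?_
  have hchoose : ((j + 1).choose (k + 1) : K) ≠ 0 :=
    Nat.cast_ne_zero.2 (Nat.choose_pos (by have hkj := (mem_Ioc.1 hj).1; omega)).ne'
  rw [← sum_div, ← mul_sum, ← Nat.cast_sum, hG.sum_faceDegree, Nat.cast_mul]
  field_simp

end IsSimplicialComplex

theorem sum_sum_div_faceDegree {α K : Type*} [DecidableEq α] [Field K] [CharZero K]
    {G : Finset (Finset α)} {k : ℕ} (hcover : ∀ y ∈ G, y.card ≤ k + 1 → 0 < faceDegree G k y)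
    (f : Finset α → K) :
    ∑ x ∈ G with x.card = k + 1, ∑ y ∈ G with y ⊆ x, f y / faceDegree G k y =
      ∑ y ∈ G with y.card ≤ k + 1, f y := by
  have hdeg : ∀ y, faceDegree G k y = #{x ∈ {x ∈ G | x.card = k + 1} | y ⊆ x} := by
    simp [faceDegree, filter_filter]
  simp_rw [hdeg]
  rw [sum_sum_filter_div_card_filter]
  congr 1
  refine filter_congr fun y hy => ⟨?_, fun hy' => ?_⟩
  · rintro ⟨x, hx, hyx⟩
    exact (mem_filter.1 hx).2 ▸ card_le_card hyx
  · exact filter_nonempty_iff.1 (card_pos.1 (hdeg y ▸ hcover y hy hy'))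

/-- Gauss-Bonnet for the k-form curvature `K_k` supported on the `k`-dimensional
simplices `G_k`, assuming `G_k` covers `G`. -/
theorem gauss_bonnet_k_form_curvature {α : Type*} [DecidableEq α]
    (G : Finset (Finset α)) (hG : IsSimplicialComplex G) (k : ℕ)
    (Gk : Finset (Finset α)) (hGk : Gk = G.filter fun x => x.card = k + 1)
    -- degree functions: `d j y` is the number of `j`-dimensional simplices containing `y`
    (d : ℕ → Finset α → ℕ)
    (hd : ∀ j y, d j y = ((G.filter fun z => z.card = j + 1 ∧ y ⊆ z)).card)
    -- covering hypothesis: every simplex of dimension at most `k` is contained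
    -- in a `k`-dimensional simplex
    (hcover : ∀ y ∈ G, y.card ≤ k + 1 → 0 < d k y)
    -- the k-form curvature
    (K : Finset α → ℚ)
    (hK : ∀ x, K x =
      (∑ y ∈ G.filter fun y => y ⊆ x, ((-1 : ℚ) ^ (y.card - 1)) / (d k y)) +
      ∑ j ∈ Finset.Ioc k (G.sup Finset.card),
        ((-1 : ℚ) ^ j) * (d j x) / (Nat.choose (j + 1) (k + 1))) :
    ∑ x ∈ Gk, K x = ∑ x ∈ G, ((-1 : ℚ) ^ (x.card - 1)) := by
  obtain rfl : d = faceDegree G := funext fun j => funext (hd j)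
  subst hGk
  simp only [hK, sum_add_distrib]
  rw [sum_sum_div_faceDegree hcover, hG.sum_sum_Ioc_mul_faceDegree_div_choose,
    ← sum_filter_lt_card_eq_sum_Ioc G k fun j => (-1 : ℚ) ^ j,
    ← sum_filter_add_sum_filter_not G (·.card ≤ k + 1)]
  simp only [not_le]
end

section
/- Let G be a finite abstract simplicial complex with vertex set V = \bigcup_{x \in G} x. The Levitt curvature K(v) = \sum_{x \in G, v \in x} (-1)^{dim(x)}/|x| satisfies Gauss-Bonnet: \sum_{v \in V} K(v) = \chi(G). -/
open Finset

theorem Finset.sum_biUnion_sum_filter_mem {α M : Type*} [DecidableEq α] [AddCommMonoid M]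
    (G : Finset (Finset α)) (g : Finset α → M) :
    ∑ v ∈ G.biUnion id, ∑ x ∈ G with v ∈ x, g x = ∑ x ∈ G, #x • g x := by
  rw [sum_comm' (t' := G) (s' := id)]
  · exact sum_congr rfl fun x _ => sum_const _
  · intro v x
    simp only [mem_filter, mem_biUnion, id]
    exact ⟨fun ⟨_, hx, hv⟩ => ⟨hv, hx⟩, fun ⟨hv, hx⟩ => ⟨⟨x, hx, hv⟩, hx, hv⟩⟩

theorem Finset.sum_biUnion_sum_filter_mem_div_card {α K : Type*} [DecidableEq α]
    [Field K] [CharZero K] (G : Finset (Finset α)) (hG : ∀ x ∈ G, x.Nonempty)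
    (f : Finset α → K) :
    ∑ v ∈ G.biUnion id, ∑ x ∈ G with v ∈ x, f x / #x = ∑ x ∈ G, f x := by
  rw [sum_biUnion_sum_filter_mem]
  refine sum_congr rfl fun x hx => ?_
  have hcard : (#x : K) ≠ 0 := Nat.cast_ne_zero.mpr (hG x hx).card_ne_zero
  rw [nsmul_eq_mul, mul_div_cancel₀ _ hcard]

/-- Gauss-Bonnet for the Levitt curvature `K(v) = ∑_{x ∋ v} (-1)^{dim x}/|x|`
on the vertex set `V = ⋃_{x ∈ G} x`. -/
theorem gauss_bonnet_levitt {α : Type*} [DecidableEq α]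
    (G : Finset (Finset α)) (hG : IsSimplicialComplex G)
    (V : Finset α) (hV : V = G.biUnion id)
    (K : α → ℚ)
    (hK : ∀ v, K v = ∑ x ∈ G.filter fun x => v ∈ x, ((-1 : ℚ) ^ (x.card - 1)) / x.card) :
    ∑ v ∈ V, K v = ∑ x ∈ G, ((-1 : ℚ) ^ (x.card - 1)) := by
  simp only [hK, hV]
  exact sum_biUnion_sum_filter_mem_div_card G hG.1 _
end

section
/- Let L be a symmetric positive semidefinite real n\times n matrix with a sign grading \omega: {1,...,n} \to {-1,+1} such that the supertrace str(L^m) = 0 for all m \ge 1. Then str(e^{-tL}) = str(I) for all t \ge 0, and the limit as t \to \infty of str(e^{-tL}) equals \sum_i \omega(i) P_{ii} where P is the orthogonal projection onto ker(L). Consequently str(I) = str(P) (the Euler-Poincaré formula: Euler characteristic equals alternating sum of dimensions of harmonic spaces). -/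
/-!
Write `L = U diag(λ) Uᵀ` with `U` orthogonal and `λ ≥ 0`. The supertrace is a continuous linear
functional, so it can be applied termwise to the exponential series of `-tL`; every term but the
constant one is a multiple of some `str (L ^ m) = 0`, hence `str (e^{-tL}) = str 1`. On the other
hand `e^{-tL} = U diag(e^{-tλ}) Uᵀ` converges to `U diag(1_{λ = 0}) Uᵀ`, which is the orthogonal
projection onto `ker L` and therefore equals `P`. The two values of the limit must agree.
-/

open Filter Topology Matrix Unitary

theorem ContinuousLinearMap.map_exp_eq_map_one_of_map_pow_eq_zero {𝕂 𝔸 B : Type*} [RCLike 𝕂]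
    [NormedRing 𝔸] [NormedAlgebra 𝕂 𝔸] [CompleteSpace 𝔸]
    [AddCommGroup B] [Module 𝕂 B] [TopologicalSpace B] [T2Space B]
    (φ : 𝔸 →L[𝕂] B) {x : 𝔸} (hx : ∀ k, 1 ≤ k → φ (x ^ k) = 0) :
    φ (NormedSpace.exp x) = φ 1 := by
  have hsum := (NormedSpace.exp_series_hasSum_exp' (𝕂 := 𝕂) x).mapL φ
  refine (hsum.unique (hasSum_single 0 fun k hk => ?_)).trans ?_
  · simp [hx k (Nat.one_le_iff_ne_zero.mpr hk)]
  · simp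

theorem IsSelfAdjoint.eq_of_mul_eq_of_mul_eq {R : Type*} [Mul R] [StarMul R] {p q : R}
    (hp : IsSelfAdjoint p) (hq : IsSelfAdjoint q) (hpq : p * q = q) (hqp : q * p = p) :
    p = q := calc
  p = star (q * p) := by rw [hqp, hp.star_eq]
  _ = q := by rw [star_mul, hp.star_eq, hq.star_eq, hpq]

theorem Matrix.mul_eq_right_of_mulVec_eq_self {m n k R : Type*} [Fintype n] [Fintype k]
    [CommSemiring R] {A : Matrix m n R} {P : Matrix n n R} {Q : Matrix n k R}
    (hP : ∀ x, A *ᵥ x = 0 → P *ᵥ x = x) (hQ : A * Q = 0) : P * Q = Q :=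
  ext_iff_mulVec.2 fun v => by
    rw [← mulVec_mulVec]
    exact hP _ (by rw [mulVec_mulVec, hQ, zero_mulVec])

theorem Real.tendsto_exp_neg_mul_atTop {μ : ℝ} (hμ : 0 ≤ μ) :
    Tendsto (fun t => Real.exp (-t * μ)) atTop (𝓝 (if μ = 0 then 1 else 0)) := by
  rcases hμ.eq_or_lt with rfl | hμ
  · simp
  · rw [if_neg hμ.ne']
    exact Real.tendsto_exp_atBot.comp (tendsto_neg_atTop_atBot.atBot_mul_const hμ)

theorem Unitary.continuous_conjStarAlgAut {S R : Type*} [Semiring R] [StarMul R]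
    [SMul S R] [IsScalarTower S R R] [SMulCommClass S R R] [TopologicalSpace R]
    [IsTopologicalSemiring R] (u : unitary R) : Continuous (conjStarAlgAut S R u) := by
  change Continuous fun x : R => _ * x * _
  fun_prop

namespace Matrix

variable {n : Type*} [Fintype n] [DecidableEq n]

theorem map_exp_eq_map_one_of_map_pow_eq_zero {𝕜 : Type*} [RCLike 𝕜]
    (φ : Matrix n n 𝕜 →ₗ[𝕜] 𝕜) {A : Matrix n n 𝕜}
    (hA : ∀ k, 1 ≤ k → φ (A ^ k) = 0) : φ (NormedSpace.exp A) = φ 1 :=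
  open scoped Norms.Operator in
  φ.toContinuousLinearMap.map_exp_eq_map_one_of_map_pow_eq_zero hA

theorem exp_conjStarAlgAut {𝕜 : Type*} [RCLike 𝕜]
    (u : unitary (Matrix n n 𝕜)) (A : Matrix n n 𝕜) :
    NormedSpace.exp (conjStarAlgAut 𝕜 _ u A) = conjStarAlgAut 𝕜 _ u (NormedSpace.exp A) := by
  simpa using exp_units_conj (Unitary.toUnits u) A

noncomputable def supertrace {R : Type*} [CommSemiring R] (ω : n → R) : Matrix n n R →ₗ[R] R :=
  traceLinearMap n R R ∘ₗ LinearMap.mulLeft R (diagonal ω)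

theorem supertrace_apply {R : Type*} [CommSemiring R] (ω : n → R) (A : Matrix n n R) :
    supertrace ω A = ∑ i, ω i * A i i := by
  simp [supertrace, trace, diagonal_mul]

namespace IsHermitian

variable {A : Matrix n n ℝ} (hA : A.IsHermitian)

theorem eq_conjStarAlgAut_diagonal :
    A = conjStarAlgAut ℝ _ hA.eigenvectorUnitary (diagonal hA.eigenvalues) := by
  simpa using hA.spectral_theorem

theorem exp_smul_eq (s : ℝ) :
    NormedSpace.exp (s • A) = conjStarAlgAut ℝ _ hA.eigenvectorUnitary
      (diagonal fun k => Real.exp (s * hA.eigenvalues k)) := by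
  nth_rw 1 [hA.eq_conjStarAlgAut_diagonal]
  rw [← map_smul, exp_conjStarAlgAut, ← diagonal_smul, exp_diagonal]
  congr 2
  ext k
  simp [Real.exp_eq_exp_ℝ]

noncomputable def kernelProj : Matrix n n ℝ :=
  conjStarAlgAut ℝ _ hA.eigenvectorUnitary
    (diagonal fun k => if hA.eigenvalues k = 0 then 1 else 0)

theorem isSelfAdjoint_kernelProj : IsSelfAdjoint hA.kernelProj :=
  (isHermitian_diagonal _).isSelfAdjoint.map _

theorem mul_kernelProj : A * hA.kernelProj = 0 := calc
  A * hA.kernelProj = conjStarAlgAut ℝ _ hA.eigenvectorUnitary (diagonal hA.eigenvalues *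
      diagonal fun k => if hA.eigenvalues k = 0 then 1 else 0) := by
    rw [map_mul, ← hA.eq_conjStarAlgAut_diagonal]; rfl
  _ = 0 := by
    rw [diagonal_mul_diagonal, ← map_zero (conjStarAlgAut ℝ _ hA.eigenvectorUnitary),
      ← diagonal_zero]
    congr 2
    ext k
    by_cases h : hA.eigenvalues k = 0 <;> simp [h]

/-- With `0⁻¹ = 0`, `diagonal λ⁻¹` is the Moore-Penrose pseudo-inverse of `diagonal λ`. -/
theorem one_sub_kernelProj : 1 - hA.kernelProj =
    conjStarAlgAut ℝ _ hA.eigenvectorUnitary (diagonal hA.eigenvalues⁻¹) * A := calc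
  1 - hA.kernelProj = conjStarAlgAut ℝ _ hA.eigenvectorUnitary
      (diagonal hA.eigenvalues⁻¹ * diagonal hA.eigenvalues) := by
    rw [kernelProj, ← map_one (conjStarAlgAut ℝ _ hA.eigenvectorUnitary), ← map_sub,
      diagonal_mul_diagonal, ← diagonal_one, diagonal_sub]
    congr 2
    ext k
    by_cases h : hA.eigenvalues k = 0 <;> simp [h]
  _ = _ := by rw [map_mul, ← hA.eq_conjStarAlgAut_diagonal]

theorem kernelProj_mul_of_mul_eq_zero {m : Type*} [Fintype m] {B : Matrix n m ℝ}
    (hB : A * B = 0) : hA.kernelProj * B = B := by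
  have h : (1 - hA.kernelProj) * B = 0 := by
    rw [one_sub_kernelProj, Matrix.mul_assoc, hB, Matrix.mul_zero]
  rw [Matrix.sub_mul, Matrix.one_mul, sub_eq_zero] at h
  exact h.symm

theorem kernelProj_eq {P : Matrix n n ℝ} (hP : IsSelfAdjoint P) (hAP : A * P = 0)
    (hPA : ∀ x, A *ᵥ x = 0 → P *ᵥ x = x) : hA.kernelProj = P :=
  hA.isSelfAdjoint_kernelProj.eq_of_mul_eq_of_mul_eq hP (hA.kernelProj_mul_of_mul_eq_zero hAP)
    (mul_eq_right_of_mulVec_eq_self hPA hA.mul_kernelProj)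

end IsHermitian

theorem PosSemidef.tendsto_exp_neg_smul {A : Matrix n n ℝ} (hA : A.PosSemidef) :
    Tendsto (fun t : ℝ => NormedSpace.exp ((-t) • A)) atTop (𝓝 hA.isHermitian.kernelProj) := by
  simp_rw [hA.isHermitian.exp_smul_eq]
  refine ((continuous_conjStarAlgAut _).tendsto _).comp
    ((continuous_id.matrix_diagonal.tendsto _).comp (tendsto_pi_nhds.2 fun k => ?_))
  exact Real.tendsto_exp_neg_mul_atTop (hA.eigenvalues_nonneg k)

end Matrix

theorem mckean_singer_euler_poincare_general {n : ℕ}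
    (L : Matrix (Fin n) (Fin n) ℝ) (hL : L.PosSemidef)
    (ω : Fin n → ℝ)
    (str : Matrix (Fin n) (Fin n) ℝ → ℝ)
    (hstr : ∀ A, str A = ∑ i, ω i * A i i)
    (hMS : ∀ m : ℕ, 1 ≤ m → str (L ^ m) = 0)
    (P : Matrix (Fin n) (Fin n) ℝ)
    -- `P` is the orthogonal projection onto `ker L`:
    (hPsymm : P.IsSymm)
    (hPker : L * P = 0)
    (hPfix : ∀ x : Fin n → ℝ, L.mulVec x = 0 → P.mulVec x = x) :
    (∀ t : ℝ, 0 ≤ t → str (NormedSpace.exp ((-t) • L)) = str 1) ∧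
    Filter.Tendsto (fun t : ℝ => str (NormedSpace.exp ((-t) • L)))
      Filter.atTop (nhds (str P)) ∧
    str 1 = str P := by
  obtain rfl : str = supertrace ω := funext fun A => (hstr A).trans (supertrace_apply ω A).symm
  have hheat (t : ℝ) : supertrace ω (NormedSpace.exp ((-t) • L)) = supertrace ω 1 :=
    map_exp_eq_map_one_of_map_pow_eq_zero _ fun m hm => by
      rw [smul_pow, map_smul, hMS m hm, smul_zero]
  have hP : hL.isHermitian.kernelProj = P :=
    hL.isHermitian.kernelProj_eq (isHermitian_iff_isSymm.2 hPsymm).isSelfAdjoint hPker hPfix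
  have hlim : Tendsto (fun t : ℝ => supertrace ω (NormedSpace.exp ((-t) • L))) atTop
      (𝓝 (supertrace ω P)) :=
    (((supertrace ω).continuous_of_finiteDimensional).tendsto P).comp
      (hP ▸ hL.tendsto_exp_neg_smul)
  refine ⟨fun t _ => hheat t, hlim, tendsto_nhds_unique ?_ hlim⟩
  simp only [hheat, tendsto_const_nhds]

/-- McKean-Singer / Euler-Poincaré: for a symmetric positive semidefinite matrix
`L` with grading `ω` whose powers have vanishing supertrace, the supertrace of the
heat kernel `e^{-tL}` is constant in `t ≥ 0`, converges as `t → ∞` to the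
supertrace of the orthogonal projection `P` onto `ker L`, and hence
`str(I) = str(P)` (Euler characteristic equals the alternating sum of the
dimensions of the harmonic spaces). -/
theorem mckean_singer_euler_poincare {n : ℕ}
    (L : Matrix (Fin n) (Fin n) ℝ) (hL : L.PosSemidef)
    (ω : Fin n → ℝ) (hω : ∀ i, ω i = 1 ∨ ω i = -1)
    (str : Matrix (Fin n) (Fin n) ℝ → ℝ)
    (hstr : ∀ A, str A = ∑ i, ω i * A i i)
    (hMS : ∀ m : ℕ, 1 ≤ m → str (L ^ m) = 0)
    (P : Matrix (Fin n) (Fin n) ℝ)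
    -- `P` is the orthogonal projection onto `ker L`:
    (hPsymm : P.IsSymm) (hPidem : P * P = P)
    (hPker : L * P = 0)
    (hPfix : ∀ x : Fin n → ℝ, L.mulVec x = 0 → P.mulVec x = x) :
    (∀ t : ℝ, 0 ≤ t → str (NormedSpace.exp ((-t) • L)) = str 1) ∧
    Filter.Tendsto (fun t : ℝ => str (NormedSpace.exp ((-t) • L)))
      Filter.atTop (nhds (str P)) ∧
    str 1 = str P :=
  mckean_singer_euler_poincare_general L hL ω str hstr hMS P hPsymm hPker hPfix
end

section
/- Let G be a finite abstract simplicial complex with vertex set V. For each vertex v, let S(v) be the link of v: the set of simplices y \in G with v \notin y and y \cup {v} \in G. For a complex H let g_H(t) = 1 + \sum_{y \in H} t^{|y|}. Then the derivative of the generating function g_G(t) = 1 + \sum_{x \in G} t^{|x|} satisfies g_G'(t) = \sum_{v \in V} g_{S(v)}(t). -/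
/-- The Levitt/Gauss-Bonnet generating-function identity: with
`g_G(t) = 1 + ∑_{x ∈ G} t^{|x|}` and `S(v)` the link of a vertex `v`,
the derivative satisfies `g_G'(t) = ∑_{v ∈ V} g_{S(v)}(t)`. -/
theorem generating_function_derivative {α : Type*} [DecidableEq α]
    (G : Finset (Finset α)) (hG : IsSimplicialComplex G)
    (V : Finset α) (hV : V = G.biUnion id)
    -- the link `S(v) = {y ∈ G : v ∉ y, y ∪ {v} ∈ G}`
    (S : α → Finset (Finset α))
    (hS : ∀ v, S v = G.filter fun y => v ∉ y ∧ insert v y ∈ G)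
    (t : ℝ) :
    HasDerivAt (fun s : ℝ => 1 + ∑ x ∈ G, s ^ x.card)
      (∑ v ∈ V, (1 + ∑ y ∈ S v, t ^ y.card)) t := by
  have key : (∑ v ∈ V, (1 + ∑ y ∈ S v, t ^ y.card))
      = ∑ x ∈ G, (x.card : ℝ) * t ^ (x.card - 1) := by
    have step1 : ∀ x ∈ G, (x.card : ℝ) * t ^ (x.card - 1)
        = ∑ v ∈ x, t ^ (x.card - 1) := by
      intro x _; rw [Finset.sum_const, nsmul_eq_mul]
    rw [Finset.sum_congr rfl step1]
    -- swap sums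
    have hsub : ∀ x ∈ G, x ⊆ V := by
      intro x hx a ha
      rw [hV]; exact Finset.mem_biUnion.2 ⟨x, hx, ha⟩
    have swap : (∑ x ∈ G, ∑ v ∈ x, (t ^ (x.card - 1)))
        = ∑ v ∈ V, ∑ x ∈ G.filter (fun x => v ∈ x), t ^ (x.card - 1) := by
      rw [Finset.sum_comm' (s := G) (t := fun x => x) (t' := V)
        (s' := fun v => G.filter (fun x => v ∈ x))]
      intro x v
      simp only [Finset.mem_filter]
      constructor
      · rintro ⟨hx, hv⟩; exact ⟨⟨hx, hv⟩, hsub x hx hv⟩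
      · rintro ⟨⟨hx, hv⟩, _⟩; exact ⟨hx, hv⟩
    rw [swap]
    apply Finset.sum_congr rfl
    intro v hv
    -- bijection x ↦ x.erase v between {x ∈ G : v ∈ x} and insert ∅ (S v)
    have hne : ∅ ∉ S v := by
      rw [hS]; simp only [Finset.mem_filter]
      rintro ⟨h, -⟩
      exact Finset.not_nonempty_empty (hG.1 _ h)
    have : (∑ x ∈ G.filter (fun x => v ∈ x), t ^ (x.card - 1))
        = ∑ y ∈ insert ∅ (S v), t ^ y.card := by
      apply Finset.sum_nbij' (i := fun x => x.erase v) (j := fun y => insert v y)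
      · intro x hx
        rw [Finset.mem_filter] at hx
        obtain ⟨hxG, hvx⟩ := hx
        rcases eq_or_ne (x.erase v) ∅ with h | h
        · rw [h]; exact Finset.mem_insert_self _ _
        · apply Finset.mem_insert_of_mem
          rw [hS, Finset.mem_filter]
          refine ⟨hG.2 x hxG _ (Finset.erase_subset _ _)
            (Finset.nonempty_iff_ne_empty.2 h), Finset.notMem_erase _ _, ?_⟩
          rwa [Finset.insert_erase hvx]
      · intro y hy
        rw [Finset.mem_filter]
        rcases Finset.mem_insert.1 hy with h | h
        · subst h
          have : v ∈ V := hv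
          rw [hV] at this
          obtain ⟨x, hxG, hvx⟩ := Finset.mem_biUnion.1 this
          simp only [id] at hvx
          refine ⟨?_, Finset.mem_insert_self _ _⟩
          simpa using hG.2 x hxG {v} (Finset.singleton_subset_iff.2 hvx)
            (Finset.singleton_nonempty v)
        · rw [hS, Finset.mem_filter] at h
          exact ⟨h.2.2, Finset.mem_insert_self _ _⟩
      · intro x hx
        rw [Finset.mem_filter] at hx
        exact Finset.insert_erase hx.2
      · intro y hy
        have hvy : v ∉ y := by
          rcases Finset.mem_insert.1 hy with h | h
          · subst h; simp
          · rw [hS, Finset.mem_filter] at h; exact h.2.1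
        exact Finset.erase_insert hvy
      · intro x hx
        rw [Finset.mem_filter] at hx
        rw [Finset.card_erase_of_mem hx.2]
    rw [this, Finset.sum_insert hne]
    simp
  rw [key]
  have : HasDerivAt (fun s : ℝ => ∑ x ∈ G, s ^ x.card)
      (∑ x ∈ G, (x.card : ℝ) * t ^ (x.card - 1)) t := by
    apply HasDerivAt.fun_sum
    intro x _
    exact hasDerivAt_pow x.card t
  simpa using this.const_add 1
end
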